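/- arXiv:2002.06858 — 3 statements merged into one kernel-verified Lean document; each statement's English description precedes it below -/
import Mathlib

section
/- Let α ∈ (0,1] and β = √(1−α²). Suppose f : ℝ → ℝ³ is twice continuously differentiable, satisfies |f(x)| = 1 for all x ∈ ℝ, and solves α f''(x) + α|f'(x)|² f(x) + β (f × f')'(x) − (x/2) f'(x) = 0 for all x ∈ ℝ. Then f also satisfies the identity f''(x) + |f'(x)|² f(x) − (x/2)·(α f'(x) − β f(x) × f'(x)) = 0 for all x ∈ ℝ. -/
/-!
Differentiating `|f|² = 1` twice gives `f · f' = 0` and `f · f'' = -|f'|²`. Since `f' × f' = 0`,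
`(f × f')' = f × f''`, and crossing the profile equation with `f` turns it, by the expansion
`f × (f × f'') = (f · f'') f - (f · f) f'' = -|f'|² f - f''`, into a second linear relation between
`f''` and `f × f''`. Taking `α` times the first minus `β` times the second eliminates `f × f''`,
and `α² + β² = 1` leaves the claimed identity.
-/

noncomputable section

open Real
open scoped Matrix RealInnerProductSpace

abbrev E3 := EuclideanSpace ℝ (Fin 3)

/-- The usual cross product on `ℝ³`. -/
def cross3 (u v : E3) : E3 :=
  (WithLp.equiv 2 (Fin 3 → ℝ)).symm
    ![u 1 * v 2 - u 2 * v 1, u 2 * v 0 - u 0 * v 2, u 0 * v 1 - u 1 * v 0]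

theorem cross3_eq_toLp_crossProduct (u v : E3) :
    cross3 u v = WithLp.toLp 2 (u.ofLp ⨯₃ v.ofLp) :=
  rfl

theorem cross3_self (u : E3) : cross3 u u = 0 := by
  rw [cross3_eq_toLp_crossProduct, cross_self]
  rfl

theorem cross3_cross3_self (u w : E3) :
    cross3 u (cross3 u w) = ⟪u, w⟫ • u - ⟪u, u⟫ • w := by
  simp only [cross3_eq_toLp_crossProduct, cross_cross_eq_smul_sub_smul',
    EuclideanSpace.inner_eq_star_dotProduct, star_trivial, dotProduct_comm]
  rfl

def cross3L : E3 →L[ℝ] E3 →L[ℝ] E3 :=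
  let e := WithLp.linearEquiv 2 ℝ (Fin 3 → ℝ)
  LinearMap.toContinuousLinearMap
    (LinearMap.toContinuousLinearMap.toLinearMap ∘ₗ
      (crossProduct.compl₁₂ e.toLinearMap e.toLinearMap).compr₂ e.symm.toLinearMap)

theorem cross3L_apply (u v : E3) : cross3L u v = cross3 u v :=
  rfl

theorem deriv_cross3 {u v : ℝ → E3} {x : ℝ} (hu : DifferentiableAt ℝ u x)
    (hv : DifferentiableAt ℝ v x) :
    deriv (fun y => cross3 (u y) (v y)) x = cross3 (u x) (deriv v x) + cross3 (deriv u x) (v x) :=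
  cross3L.deriv_of_bilinear (fun _ => hu) (fun _ => hv)

section ConstantNorm

variable {F : Type*} [NormedAddCommGroup F] [InnerProductSpace ℝ F] {f : ℝ → F} {c : ℝ}

theorem inner_deriv_eq_zero_of_norm_eq {x : ℝ} (hf : ∀ y, ‖f y‖ = c)
    (hx : DifferentiableAt ℝ f x) : ⟪f x, deriv f x⟫ = 0 := by
  have hconst : (‖f ·‖ ^ 2) = fun _ => c ^ 2 := funext fun y => by rw [hf y]
  have h := hx.hasDerivAt.norm_sq
  rw [hconst] at h
  simpa using h.unique (hasDerivAt_const x (c ^ 2))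

theorem inner_deriv_deriv_eq_neg_norm_sq_of_norm_eq {x : ℝ} (hf : ∀ y, ‖f y‖ = c)
    (hd : Differentiable ℝ f) (hx : DifferentiableAt ℝ (deriv f) x) :
    ⟪f x, deriv (deriv f) x⟫ = -‖deriv f x‖ ^ 2 := by
  have hconst : (fun y => ⟪f y, deriv f y⟫) = fun _ => 0 :=
    funext fun y => inner_deriv_eq_zero_of_norm_eq hf (hd y)
  have h := (hd x).hasDerivAt.inner ℝ hx.hasDerivAt
  rw [hconst, real_inner_self_eq_norm_sq] at h
  linear_combination h.unique (hasDerivAt_const x 0)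

end ConstantNorm

/-- The pointwise algebra: with `u = f x`, `v = f' x`, `w = f'' x` and `s = x / 2`. -/
theorem add_smul_sub_smul_eq_zero_of_profile {α β s : ℝ} {u v w : E3} (hαβ : α ^ 2 + β ^ 2 = 1)
    (hu : ⟪u, u⟫ = 1) (huw : ⟪u, w⟫ = -‖v‖ ^ 2)
    (h : α • w + (α * ‖v‖ ^ 2) • u + β • cross3 u w - s • v = 0) :
    w + ‖v‖ ^ 2 • u - s • (α • v - β • cross3 u v) = 0 := by
  have hcross : α • cross3 u w + β • ((-‖v‖ ^ 2) • u - w) - s • cross3 u v = 0 := by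
    simpa only [map_add, map_sub, map_smul, cross3L_apply, cross3_self, cross3_cross3_self, hu,
      huw, one_smul, smul_zero, add_zero, map_zero] using congrArg (cross3L u) h
  have hkey : (α ^ 2 + β ^ 2) • (w + ‖v‖ ^ 2 • u) - s • (α • v - β • cross3 u v) = 0 := by
    linear_combination (norm := module) α • h - β • hcross
  rwa [hαβ, one_smul] at hkey

theorem stmt1 (α β : ℝ) (hα : α ∈ Set.Ioc (0 : ℝ) 1) (hβ : β = Real.sqrt (1 - α ^ 2))
    (f : ℝ → E3) (hf : ContDiff ℝ 2 f) (hunit : ∀ x : ℝ, ‖f x‖ = 1)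
    (heq : ∀ x : ℝ,
      α • deriv (deriv f) x + (α * ‖deriv f x‖ ^ 2) • f x
        + β • deriv (fun y => cross3 (f y) (deriv f y)) x - (x / 2) • deriv f x = 0) :
    ∀ x : ℝ,
      deriv (deriv f) x + (‖deriv f x‖ ^ 2) • f x
        - (x / 2) • (α • deriv f x - β • cross3 (f x) (deriv f x)) = 0 := by
  intro x
  have hd : Differentiable ℝ f := hf.differentiable (by norm_num)
  have hd' : Differentiable ℝ (deriv f) := hf.differentiable_deriv_two
  have hαβ : α ^ 2 + β ^ 2 = 1 := by
    rw [hβ, sq_sqrt (sub_nonneg.mpr (pow_le_one₀ hα.1.le hα.2))]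
    ring
  have hunit' : ⟪f x, f x⟫ = 1 := by rw [real_inner_self_eq_norm_sq, hunit x, one_pow]
  have hderiv_cross : deriv (fun y => cross3 (f y) (deriv f y)) x =
      cross3 (f x) (deriv (deriv f) x) := by
    rw [deriv_cross3 (hd x) (hd' x), cross3_self, add_zero]
  exact add_smul_sub_smul_eq_zero_of_profile hαβ hunit'
    (inner_deriv_deriv_eq_neg_norm_sq_of_norm_eq hunit hd (hd' x)) (hderiv_cross ▸ heq x)
end
end

section
/- Fix α ∈ (0,1], β = √(1−α²) and c > 0. Let m, n, b : ℝ → ℝ be differentiable functions satisfying the scalar Serret–Frenet system m'(x) = c e^{αx²/4} n(x), n'(x) = −c e^{αx²/4} m(x) − (βx/2) b(x), b'(x) = (βx/2) n(x) on ℝ, with m(0)² + n(0)² + b(0)² = 1. Then the improper integral B := b(0) − (β/(2c)) ∫₀^∞ (1 − αs²/2) e^{−αs²/4} m(s) ds is well defined, the limit lim_{x→∞} b(x) exists and equals B, for all x ∈ ℝ one has b(x) = B + (βx/(2c)) e^{−αx²/4} m(x) + (β/(2c)) ∫_x^∞ (1 − αs²/2) e^{−αs²/4} m(s) ds, and for all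 x ≥ 1, |b(x) − B| ≤ (6β/(cα)) x e^{−αx²/4}. -/
noncomputable section

open Real MeasureTheory Filter

/-!
The system rotates the frame `(m, n, b)`, so `m² + n² + b²` is conserved and `|m| ≤ 1`.
Since `m' = c e^{αx²/4} n`, the binormal equation reads `b' = (β / 2c) · x e^{-αx²/4} · m'`;
integrating by parts against the tail `∫_x^∞` gives the representation of `b`. The boundary
term and the tail `∫_x^∞ (1 + αs²/2) e^{-αs²/4} ds = x e^{-αx²/4} + 2 ∫_x^∞ e^{-αs²/4} ds`
are both `O(x e^{-αx²/4})`, which gives the estimate and hence the limit.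
-/

section GaussianWeight

variable {α : ℝ}

theorem hasDerivAt_exp_neg_mul_sq_div_four (α s : ℝ) :
    HasDerivAt (fun t => exp (-α * t ^ 2 / 4)) (exp (-α * s ^ 2 / 4) * (-α * s / 2)) s := by
  have h := ((hasDerivAt_pow 2 s).const_mul (-α)).div_const 4
  exact (h.congr_deriv (by push_cast; ring)).exp

theorem hasDerivAt_mul_exp_neg_mul_sq_div_four (α s : ℝ) :
    HasDerivAt (fun t => t * exp (-α * t ^ 2 / 4))
      ((1 - α * s ^ 2 / 2) * exp (-α * s ^ 2 / 4)) s :=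
  ((hasDerivAt_id s).mul (hasDerivAt_exp_neg_mul_sq_div_four α s)).congr_deriv
    (by simp only [id_eq]; ring)

theorem integrable_pow_mul_exp_neg_mul_sq_div_four (hα : 0 < α) (k : ℕ) :
    Integrable fun s : ℝ => s ^ k * exp (-α * s ^ 2 / 4) := by
  have h := integrable_rpow_mul_exp_neg_mul_sq (show 0 < α / 4 by positivity)
    (show (-1 : ℝ) < k by linarith [k.cast_nonneg (α := ℝ)])
  simpa only [rpow_natCast, neg_div, neg_mul, mul_div_assoc', div_mul_eq_mul_div] using h

theorem integrable_add_mul_sq_mul_exp_neg_mul_sq_div_four (hα : 0 < α) (p q : ℝ) :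
    Integrable fun s : ℝ => (p + q * s ^ 2) * exp (-α * s ^ 2 / 4) := by
  have h := ((integrable_pow_mul_exp_neg_mul_sq_div_four hα 0).const_mul p).add
    ((integrable_pow_mul_exp_neg_mul_sq_div_four hα 2).const_mul q)
  exact h.congr (ae_of_all _ fun s => by simp only [Pi.add_apply]; ring)

theorem integrable_one_sub_mul_sq_mul_exp_neg_mul_sq_div_four (hα : 0 < α) :
    Integrable fun s : ℝ => (1 - α * s ^ 2 / 2) * exp (-α * s ^ 2 / 4) :=
  (integrable_add_mul_sq_mul_exp_neg_mul_sq_div_four hα 1 (-α / 2)).congr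
    (ae_of_all _ fun s => by ring)

theorem tendsto_mul_exp_neg_mul_sq_div_four_atTop (hα : 0 < α) :
    Tendsto (fun x : ℝ => x * exp (-α * x ^ 2 / 4)) atTop (nhds 0) :=
  tendsto_zero_of_hasDerivAt_of_integrableOn_Ioi (a := 0)
    (fun s _ => hasDerivAt_mul_exp_neg_mul_sq_div_four α s)
    (integrable_one_sub_mul_sq_mul_exp_neg_mul_sq_div_four hα).integrableOn
    (by simpa using (integrable_pow_mul_exp_neg_mul_sq_div_four hα 1).integrableOn)

theorem tendsto_exp_neg_mul_sq_div_four_atTop (hα : 0 < α) :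
    Tendsto (fun x : ℝ => exp (-α * x ^ 2 / 4)) atTop (nhds 0) := by
  refine (tendsto_exp_atBot.comp ((tendsto_pow_atTop two_ne_zero).atTop_mul_const_of_neg
    (show -α / 4 < 0 by linarith))).congr fun x => ?_
  simp only [Function.comp_apply]
  ring_nf

theorem integral_Ioi_mul_exp_neg_mul_sq_div_four (hα : 0 < α) (x : ℝ) :
    ∫ s in Set.Ioi x, s * exp (-α * s ^ 2 / 4) = 2 / α * exp (-α * x ^ 2 / 4) := by
  have hderiv (s : ℝ) :
      HasDerivAt (fun t => -(2 / α * exp (-α * t ^ 2 / 4))) (s * exp (-α * s ^ 2 / 4)) s :=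
    ((hasDerivAt_exp_neg_mul_sq_div_four α s).const_mul (2 / α)).neg.congr_deriv
      (by field_simp)
  rw [integral_Ioi_of_hasDerivAt_of_tendsto' (fun s _ => hderiv s)
    (by simpa using (integrable_pow_mul_exp_neg_mul_sq_div_four hα 1).integrableOn)
    (by simpa using ((tendsto_exp_neg_mul_sq_div_four_atTop hα).const_mul (2 / α)).neg)]
  ring

theorem integral_Ioi_mul_sq_sub_one_mul_exp_neg_mul_sq_div_four (hα : 0 < α) (x : ℝ) :
    ∫ s in Set.Ioi x, (α * s ^ 2 / 2 - 1) * exp (-α * s ^ 2 / 4)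
      = x * exp (-α * x ^ 2 / 4) := by
  have hderiv (s : ℝ) : HasDerivAt (fun t => -(t * exp (-α * t ^ 2 / 4)))
      ((α * s ^ 2 / 2 - 1) * exp (-α * s ^ 2 / 4)) s :=
    (hasDerivAt_mul_exp_neg_mul_sq_div_four α s).neg.congr_deriv (by ring)
  rw [integral_Ioi_of_hasDerivAt_of_tendsto' (fun s _ => hderiv s)
    ((integrable_add_mul_sq_mul_exp_neg_mul_sq_div_four hα (-1) (α / 2)).congr
      (ae_of_all _ fun s => by ring)).integrableOn
    (by simpa using (tendsto_mul_exp_neg_mul_sq_div_four_atTop hα).neg)]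
  ring

theorem integral_Ioi_one_add_mul_sq_mul_exp_neg_mul_sq_div_four_le (hα : 0 < α) {x : ℝ}
    (hx : 1 ≤ x) :
    ∫ s in Set.Ioi x, (1 + α * s ^ 2 / 2) * exp (-α * s ^ 2 / 4)
      ≤ (1 + 4 / α) * (x * exp (-α * x ^ 2 / 4)) := by
  have hexp := (integrable_pow_mul_exp_neg_mul_sq_div_four hα 0).integrableOn (s := Set.Ioi x)
  have hmul := (integrable_pow_mul_exp_neg_mul_sq_div_four hα 1).integrableOn (s := Set.Ioi x)
  simp only [pow_zero, one_mul, pow_one] at hexp hmul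
  have hsplit : ∫ s in Set.Ioi x, (1 + α * s ^ 2 / 2) * exp (-α * s ^ 2 / 4)
      = (∫ s in Set.Ioi x, (α * s ^ 2 / 2 - 1) * exp (-α * s ^ 2 / 4))
        + 2 * ∫ s in Set.Ioi x, exp (-α * s ^ 2 / 4) := by
    rw [← integral_const_mul, ← integral_add
      ((integrable_add_mul_sq_mul_exp_neg_mul_sq_div_four hα (-1) (α / 2)).congr
        (ae_of_all _ fun s => by ring)).integrableOn (hexp.const_mul 2)]
    exact integral_congr_ae (ae_of_all _ fun s => by ring)
  have hexp_le : ∫ s in Set.Ioi x, exp (-α * s ^ 2 / 4)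
      ≤ ∫ s in Set.Ioi x, s * exp (-α * s ^ 2 / 4) :=
    setIntegral_mono_on hexp hmul measurableSet_Ioi fun s hs =>
      le_mul_of_one_le_left (exp_pos _).le (hx.trans (le_of_lt hs))
  have hgx : exp (-α * x ^ 2 / 4) ≤ x * exp (-α * x ^ 2 / 4) :=
    le_mul_of_one_le_left (exp_pos _).le hx
  rw [hsplit, integral_Ioi_mul_sq_sub_one_mul_exp_neg_mul_sq_div_four hα]
  rw [integral_Ioi_mul_exp_neg_mul_sq_div_four hα] at hexp_le
  calc x * exp (-α * x ^ 2 / 4) + 2 * ∫ s in Set.Ioi x, exp (-α * s ^ 2 / 4)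
      ≤ x * exp (-α * x ^ 2 / 4) + 4 / α * exp (-α * x ^ 2 / 4) := by
        rw [show 4 / α * exp (-α * x ^ 2 / 4) = 2 * (2 / α * exp (-α * x ^ 2 / 4)) by ring]
        gcongr
    _ ≤ x * exp (-α * x ^ 2 / 4) + 4 / α * (x * exp (-α * x ^ 2 / 4)) := by gcongr
    _ = (1 + 4 / α) * (x * exp (-α * x ^ 2 / 4)) := by ring

theorem integrable_one_sub_mul_sq_mul_exp_neg_mul_sq_div_four_mul (hα : 0 < α) {m : ℝ → ℝ}
    {C : ℝ} (hm : AEStronglyMeasurable m) (hmC : ∀ s, |m s| ≤ C) :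
    Integrable fun s => (1 - α * s ^ 2 / 2) * exp (-α * s ^ 2 / 4) * m s :=
  (integrable_one_sub_mul_sq_mul_exp_neg_mul_sq_div_four hα).mul_bdd hm (ae_of_all _ hmC)

theorem abs_mul_exp_neg_mul_sq_div_four_mul_add_integral_Ioi_le (hα : 0 < α) {m : ℝ → ℝ}
    (hm1 : ∀ s, |m s| ≤ 1) {x : ℝ} (hx : 1 ≤ x) :
    |x * exp (-α * x ^ 2 / 4) * m x
        + ∫ s in Set.Ioi x, (1 - α * s ^ 2 / 2) * exp (-α * s ^ 2 / 4) * m s|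
      ≤ (2 + 4 / α) * (x * exp (-α * x ^ 2 / 4)) := by
  have hboundary : |x * exp (-α * x ^ 2 / 4) * m x| ≤ x * exp (-α * x ^ 2 / 4) := by
    rw [abs_mul, abs_of_nonneg (by positivity)]
    exact mul_le_of_le_one_right (by positivity) (hm1 x)
  have htail : |∫ s in Set.Ioi x, (1 - α * s ^ 2 / 2) * exp (-α * s ^ 2 / 4) * m s|
      ≤ (1 + 4 / α) * (x * exp (-α * x ^ 2 / 4)) := by
    have hweight : Integrable fun s : ℝ => (1 + α * s ^ 2 / 2) * exp (-α * s ^ 2 / 4) :=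
      (integrable_add_mul_sq_mul_exp_neg_mul_sq_div_four hα 1 (α / 2)).congr
        (ae_of_all _ fun s => by ring)
    have hpoly (s : ℝ) : |1 - α * s ^ 2 / 2| ≤ 1 + α * s ^ 2 / 2 := by
      have : 0 ≤ α * s ^ 2 / 2 := by positivity
      exact abs_le.2 ⟨by linarith, by linarith⟩
    have hpointwise (s : ℝ) : ‖(1 - α * s ^ 2 / 2) * exp (-α * s ^ 2 / 4) * m s‖
        ≤ (1 + α * s ^ 2 / 2) * exp (-α * s ^ 2 / 4) := by
      rw [norm_mul, norm_mul, norm_of_nonneg (exp_pos _).le, norm_eq_abs, norm_eq_abs]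
      calc |1 - α * s ^ 2 / 2| * exp (-α * s ^ 2 / 4) * |m s|
          ≤ (1 + α * s ^ 2 / 2) * exp (-α * s ^ 2 / 4) * 1 := by
            gcongr
            · exact hpoly s
            · exact hm1 s
        _ = (1 + α * s ^ 2 / 2) * exp (-α * s ^ 2 / 4) := mul_one _
    exact (norm_integral_le_of_norm_le hweight.integrableOn (ae_of_all _ hpointwise)).trans
      (integral_Ioi_one_add_mul_sq_mul_exp_neg_mul_sq_div_four_le hα hx)
  linarith [abs_add_le (x * exp (-α * x ^ 2 / 4) * m x)
    (∫ s in Set.Ioi x, (1 - α * s ^ 2 / 2) * exp (-α * s ^ 2 / 4) * m s)]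

end GaussianWeight

theorem hasDerivAt_integral_Ioi {E : Type*} [NormedAddCommGroup E] [NormedSpace ℝ E]
    [CompleteSpace E] {F : ℝ → E} (hF : Continuous F) (hint : Integrable F) (x : ℝ) :
    HasDerivAt (fun y => ∫ s in Set.Ioi y, F s) (-F x) x := by
  have htail : (fun y => ∫ s in Set.Ioi y, F s)
      = fun y => (∫ s in Set.Ioi 0, F s) - ∫ s in (0 : ℝ)..y, F s := by
    ext y
    rw [← intervalIntegral.integral_Ioi_sub_Ioi' hint.integrableOn hint.integrableOn,
      sub_sub_cancel]
  rw [htail]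
  exact (intervalIntegral.integral_hasDerivAt_right hint.intervalIntegrable
    hF.stronglyMeasurable.stronglyMeasurableAtFilter hF.continuousAt).const_sub _

theorem sq_add_sq_add_sq_eq_of_hasDerivAt {m n b : ℝ → ℝ} (κ τ : ℝ → ℝ)
    (hm : ∀ x, HasDerivAt m (κ x * n x) x) (hn : ∀ x, HasDerivAt n (-κ x * m x - τ x * b x) x)
    (hb : ∀ x, HasDerivAt b (τ x * n x) x) (x y : ℝ) :
    m x ^ 2 + n x ^ 2 + b x ^ 2 = m y ^ 2 + n y ^ 2 + b y ^ 2 := by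
  have hderiv (x : ℝ) : HasDerivAt (fun y => m y ^ 2 + n y ^ 2 + b y ^ 2) 0 x :=
    ((((hm x).pow 2).add ((hn x).pow 2)).add ((hb x).pow 2)).congr_deriv
      (by simp only [Nat.cast_ofNat]; ring)
  exact is_const_of_deriv_eq_zero (fun x => (hderiv x).differentiableAt)
    (fun x => (hderiv x).deriv) x y

theorem abs_le_one_of_hasDerivAt {m n b : ℝ → ℝ} (κ τ : ℝ → ℝ)
    (hm : ∀ x, HasDerivAt m (κ x * n x) x) (hn : ∀ x, HasDerivAt n (-κ x * m x - τ x * b x) x)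
    (hb : ∀ x, HasDerivAt b (τ x * n x) x) (h0 : m 0 ^ 2 + n 0 ^ 2 + b 0 ^ 2 = 1) (x : ℝ) :
    |m x| ≤ 1 := by
  have := sq_add_sq_add_sq_eq_of_hasDerivAt κ τ hm hn hb x 0
  rw [← sq_le_one_iff_abs_le_one]
  nlinarith [sq_nonneg (n x), sq_nonneg (b x)]

theorem sub_mul_sub_integral_Ioi_eq_of_hasDerivAt {m m' w w' b : ℝ → ℝ} (k : ℝ)
    (hm : ∀ x, HasDerivAt m (m' x) x) (hw : ∀ x, HasDerivAt w (w' x) x)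
    (hb : ∀ x, HasDerivAt b (k * (w x * m' x)) x)
    (hcont : Continuous fun s => w' s * m s) (hint : Integrable fun s => w' s * m s)
    (x y : ℝ) :
    b x - k * (w x * m x) - k * ∫ s in Set.Ioi x, w' s * m s
      = b y - k * (w y * m y) - k * ∫ s in Set.Ioi y, w' s * m s := by
  have hderiv (x : ℝ) : HasDerivAt
      (fun y => b y - k * (w y * m y) - k * ∫ s in Set.Ioi y, w' s * m s) 0 x :=
    (((hb x).sub (((hw x).mul (hm x)).const_mul k)).sub
      ((hasDerivAt_integral_Ioi hcont hint x).const_mul k)).congr_deriv (by ring)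
  exact is_const_of_deriv_eq_zero (fun x => (hderiv x).differentiableAt)
    (fun x => (hderiv x).deriv) x y

theorem binormal_eq_add_mul_exp_mul_add_integral_Ioi {α β c : ℝ} (hc : c ≠ 0)
    {m n b : ℝ → ℝ} (hm : ∀ x, HasDerivAt m (c * exp (α * x ^ 2 / 4) * n x) x)
    (hb : ∀ x, HasDerivAt b (β * x / 2 * n x) x) (hmc : Continuous m)
    (hint : Integrable fun s => (1 - α * s ^ 2 / 2) * exp (-α * s ^ 2 / 4) * m s) (x : ℝ) :
    b x = (b 0 - β / (2 * c) *
        ∫ s in Set.Ioi (0 : ℝ), (1 - α * s ^ 2 / 2) * exp (-α * s ^ 2 / 4) * m s)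
      + β * x / (2 * c) * exp (-α * x ^ 2 / 4) * m x
      + β / (2 * c) * ∫ s in Set.Ioi x, (1 - α * s ^ 2 / 2) * exp (-α * s ^ 2 / 4) * m s := by
  have hb' (x : ℝ) : HasDerivAt b
      (β / (2 * c) * (x * exp (-α * x ^ 2 / 4) * (c * exp (α * x ^ 2 / 4) * n x))) x := by
    have hcancel : exp (-α * x ^ 2 / 4) * exp (α * x ^ 2 / 4) = 1 := by
      rw [← exp_add, neg_mul, neg_div, neg_add_cancel, exp_zero]
    refine (hb x).congr_deriv ?_
    rw [show β / (2 * c) * (x * exp (-α * x ^ 2 / 4) * (c * exp (α * x ^ 2 / 4) * n x))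
        = β * x / 2 * n x * (c / c) * (exp (-α * x ^ 2 / 4) * exp (α * x ^ 2 / 4)) by ring,
      hcancel, div_self hc, mul_one, mul_one]
  have := sub_mul_sub_integral_Ioi_eq_of_hasDerivAt (β / (2 * c)) hm
    (hasDerivAt_mul_exp_neg_mul_sq_div_four α) hb' (by fun_prop) hint x 0
  simp only [zero_mul, mul_zero, sub_zero] at this
  linear_combination this

theorem stmt15 (α β c : ℝ) (hα : α ∈ Set.Ioc (0 : ℝ) 1) (hβ : β = Real.sqrt (1 - α ^ 2))
    (hc : 0 < c) (m n b : ℝ → ℝ)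
    (hmdiff : Differentiable ℝ m) (hndiff : Differentiable ℝ n) (hbdiff : Differentiable ℝ b)
    (hm : ∀ x : ℝ, deriv m x = c * Real.exp (α * x ^ 2 / 4) * n x)
    (hn : ∀ x : ℝ, deriv n x
      = -(c * Real.exp (α * x ^ 2 / 4)) * m x - (β * x / 2) * b x)
    (hb : ∀ x : ℝ, deriv b x = (β * x / 2) * n x)
    (h0 : m 0 ^ 2 + n 0 ^ 2 + b 0 ^ 2 = 1) :
    -- the improper integrals defining `B` are well defined
    (∀ x : ℝ, IntegrableOn
      (fun s : ℝ => (1 - α * s ^ 2 / 2) * Real.exp (-α * s ^ 2 / 4) * m s)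
      (Set.Ioi x)) ∧
    ∃ B : ℝ,
      B = b 0 - β / (2 * c) *
        ∫ s in Set.Ioi (0 : ℝ), (1 - α * s ^ 2 / 2) * Real.exp (-α * s ^ 2 / 4) * m s ∧
      Tendsto b atTop (nhds B) ∧
      (∀ x : ℝ, b x = B + (β * x / (2 * c)) * Real.exp (-α * x ^ 2 / 4) * m x
        + β / (2 * c) *
          ∫ s in Set.Ioi x, (1 - α * s ^ 2 / 2) * Real.exp (-α * s ^ 2 / 4) * m s) ∧
      (∀ x : ℝ, 1 ≤ x →
        |b x - B| ≤ 6 * β / (c * α) * x * Real.exp (-α * x ^ 2 / 4)) := by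
  obtain ⟨hα0, hα1⟩ := hα
  have hm' (x : ℝ) := hm x ▸ (hmdiff x).hasDerivAt
  have hb' (x : ℝ) := hb x ▸ (hbdiff x).hasDerivAt
  have hm1 := abs_le_one_of_hasDerivAt _ _ hm' (fun x => hn x ▸ (hndiff x).hasDerivAt) hb' h0
  have hint := integrable_one_sub_mul_sq_mul_exp_neg_mul_sq_div_four_mul hα0
    hmdiff.continuous.aestronglyMeasurable hm1
  have hrepr :=
    binormal_eq_add_mul_exp_mul_add_integral_Ioi hc.ne' hm' hb' hmdiff.continuous hint
  set B := b 0 - β / (2 * c) *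
    ∫ s in Set.Ioi (0 : ℝ), (1 - α * s ^ 2 / 2) * exp (-α * s ^ 2 / 4) * m s
  have hbound (x : ℝ) (hx : 1 ≤ x) :
      |b x - B| ≤ 6 * β / (c * α) * x * exp (-α * x ^ 2 / 4) := by
    have hk : 0 ≤ β / (2 * c) := div_nonneg (hβ ▸ sqrt_nonneg _) (by positivity)
    have hα12 : 2 + 4 / α ≤ 12 / α := by
      rw [show 12 / α = 8 / α + 4 / α by ring, add_le_add_iff_right, le_div_iff₀ hα0]
      linarith
    calc |b x - B| = |β / (2 * c) * (x * exp (-α * x ^ 2 / 4) * m x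
          + ∫ s in Set.Ioi x, (1 - α * s ^ 2 / 2) * exp (-α * s ^ 2 / 4) * m s)| := by
          congr 1; rw [hrepr x]; ring
      _ = β / (2 * c) * |x * exp (-α * x ^ 2 / 4) * m x
          + ∫ s in Set.Ioi x, (1 - α * s ^ 2 / 2) * exp (-α * s ^ 2 / 4) * m s| := by
          rw [abs_mul, abs_of_nonneg hk]
      _ ≤ β / (2 * c) * ((2 + 4 / α) * (x * exp (-α * x ^ 2 / 4))) := by
          gcongr; exact abs_mul_exp_neg_mul_sq_div_four_mul_add_integral_Ioi_le hα0 hm1 hx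
      _ ≤ β / (2 * c) * (12 / α * (x * exp (-α * x ^ 2 / 4))) := by gcongr
      _ = 6 * β / (c * α) * x * exp (-α * x ^ 2 / 4) := by field_simp; ring
  refine ⟨fun x => hint.integrableOn, B, rfl, ?_, hrepr, hbound⟩
  have hdecay := (tendsto_mul_exp_neg_mul_sq_div_four_atTop hα0).const_mul (6 * β / (c * α))
  rw [mul_zero] at hdecay
  refine tendsto_sub_nhds_zero_iff.1 (squeeze_zero_norm' ?_ hdecay)
  filter_upwards [eventually_ge_atTop 1] with x hx
  rw [norm_eq_abs, ← mul_assoc]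
  exact hbound x hx
end
end

section
/- Fix α ∈ (0,1], β = √(1−α²) and c > 0. Let m, n, b : ℝ → ℝ be differentiable functions satisfying the scalar Serret–Frenet system m'(x) = c e^{αx²/4} n(x), n'(x) = −c e^{αx²/4} m(x) − (βx/2) b(x), b'(x) = (βx/2) n(x) on ℝ, with m(0)² + n(0)² + b(0)² = 1, and set w := m + i n : ℝ → ℂ and Φ_α(x) = ∫₀ˣ e^{αs²/4} ds. Then the improper integral W := w(0) + (β/(2c)) ∫₀^∞ e^{i c Φ_α(s) − αs²/4} ( (βs²/2) n(s) + (1 − αs²/2) b(s) ) ds is well defined, the limit lim_{x→∞} e^{i c Φ_α(x)} w(x) exists and equals W, and for all x ≥ 1, |w(x) − e^{−i c Φ_α(x)} W| ≤ (10β/(c α²)) x e^{−αx²/4}. -/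
/-!
Multiplying `w = m + i n` by the phase `e^{i c Φ_α}` cancels the curvature term of the system,
so `(e^{i c Φ_α} w)' = -i e^{i c Φ_α} (β x / 2) b`. This is not yet integrable at infinity, but
`e^{i c Φ_α}` oscillates with frequency `c e^{α x²/4}`, so one integration by parts trades it for
the boundary term `e^{i c Φ_α} ρ`, `ρ = e^{-α x²/4} (β x / 2) b / c`, plus the integral of
`β / (2c)` times the integrand of `W`, which is `O((1 + x²) e^{-α x²/4})` because
`m² + n² + b² = 1`. Hence `e^{i c Φ_α} (w + ρ)` converges to `W` with error the Gaussian tail of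
that integral, and `ρ = O(x e^{-α x²/4})` gives the rate.
-/

noncomputable section

open Real MeasureTheory Filter

/-- `Φ_α(x) = ∫₀ˣ e^{α s²/4} ds`. -/
def Phi (α x : ℝ) : ℝ := ∫ s in (0 : ℝ)..x, Real.exp (α * s ^ 2 / 4)

open Set Topology

theorem tendsto_rpow_mul_exp_neg_mul_sq_atTop {a : ℝ} (ha : 0 < a) (s : ℝ) :
    Tendsto (fun x : ℝ => x ^ s * Real.exp (-a * x ^ 2)) atTop (𝓝 0) := by
  refine ((tendsto_rpow_abs_mul_exp_neg_mul_sq_cocompact ha s).mono_left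
    atTop_le_cocompact).congr' ?_
  filter_upwards [eventually_ge_atTop 0] with x hx
  rw [abs_of_nonneg hx]

theorem integrable_one_add_sq_mul_exp_neg_mul_sq {a : ℝ} (ha : 0 < a) :
    Integrable fun x : ℝ => (1 + x ^ 2) * Real.exp (-a * x ^ 2) := by
  have h2 := integrable_rpow_mul_exp_neg_mul_sq ha (s := 2) (by norm_num)
  simp only [Real.rpow_two] at h2
  refine ((integrable_exp_neg_mul_sq ha).add h2).congr (Eventually.of_forall fun x => ?_)
  simp only [Pi.add_apply]
  ring

theorem integral_Ioi_one_add_sq_mul_exp_neg_mul_sq_le {a x : ℝ} (ha : 0 < a) (hx : 1 ≤ x) :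
    ∫ s in Ioi x, (1 + s ^ 2) * Real.exp (-a * s ^ 2)
      ≤ (x + 1 + 1 / (2 * a)) / (2 * a) * Real.exp (-a * x ^ 2) := by
  obtain ⟨r, hr, rfl⟩ : ∃ r, 0 < r ∧ 1 / (2 * r) = a :=
    ⟨1 / (2 * a), by positivity, by field_simp⟩
  -- On `[1, ∞)` the integrand is dominated by `(s² + (1 + r) s - r) e^{-s²/2r}`, which is the
  -- derivative of `-r (s + 1 + r) e^{-s²/2r}`.
  have hA (s : ℝ) : HasDerivAt (fun s => -r * (s + 1 + r) * Real.exp (-(1 / (2 * r)) * s ^ 2))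
      ((s ^ 2 + (1 + r) * s - r) * Real.exp (-(1 / (2 * r)) * s ^ 2)) s := by
    have hexp := ((hasDerivAt_pow 2 s).const_mul (-(1 / (2 * r)))).exp
    have hlin := (((hasDerivAt_id' s).add_const 1).add_const r).const_mul (-r)
    refine (hlin.mul hexp).congr_deriv ?_
    field_simp
    ring
  have hA_tendsto :
      Tendsto (fun s => -r * (s + 1 + r) * Real.exp (-(1 / (2 * r)) * s ^ 2)) atTop (𝓝 0) := by
    have h1 := tendsto_rpow_mul_exp_neg_mul_sq_atTop ha 1
    have h0 := tendsto_rpow_mul_exp_neg_mul_sq_atTop ha 0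
    simp only [Real.rpow_one, Real.rpow_zero, one_mul] at h1 h0
    have := (h1.add (h0.const_mul (1 + r))).const_mul (-r)
    rw [mul_zero, add_zero, mul_zero] at this
    exact this.congr fun s => by ring
  have hmajorant (s : ℝ) (hs : s ∈ Ioi x) :
      (1 + s ^ 2) * Real.exp (-(1 / (2 * r)) * s ^ 2)
        ≤ (s ^ 2 + (1 + r) * s - r) * Real.exp (-(1 / (2 * r)) * s ^ 2) := by
    have : 1 ≤ s := hx.trans hs.out.le
    gcongr
    nlinarith
  have hmajorant_nonneg (s : ℝ) (hs : s ∈ Ioi x) :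
      0 ≤ (s ^ 2 + (1 + r) * s - r) * Real.exp (-(1 / (2 * r)) * s ^ 2) :=
    (by positivity : (0 : ℝ) ≤ _).trans (hmajorant s hs)
  calc ∫ s in Ioi x, (1 + s ^ 2) * Real.exp (-(1 / (2 * r)) * s ^ 2)
      ≤ ∫ s in Ioi x, (s ^ 2 + (1 + r) * s - r) * Real.exp (-(1 / (2 * r)) * s ^ 2) :=
        setIntegral_mono_on (integrable_one_add_sq_mul_exp_neg_mul_sq ha).integrableOn
          (integrableOn_Ioi_deriv_of_nonneg' (fun s _ => hA s) hmajorant_nonneg hA_tendsto)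
          measurableSet_Ioi hmajorant
    _ = 0 - -r * (x + 1 + r) * Real.exp (-(1 / (2 * r)) * x ^ 2) :=
        integral_Ioi_of_hasDerivAt_of_nonneg' (fun s _ => hA s) hmajorant_nonneg hA_tendsto
    _ = _ := by field_simp; ring

section ImproperIntegral

variable {E : Type*} [NormedAddCommGroup E] [NormedSpace ℝ E] [CompleteSpace E] {F f : ℝ → E}
  {a : ℝ}

theorem tendsto_add_integral_Ioi_of_hasDerivAt (hF : ∀ x ∈ Ici a, HasDerivAt F (f x) x)
    (hf : IntegrableOn f (Ioi a)) :
    Tendsto F atTop (𝓝 (F a + ∫ x in Ioi a, f x)) := by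
  have hlim := tendsto_limUnder_of_hasDerivAt_of_integrableOn_Ioi
    (fun x hx => hF x (mem_Ici_of_Ioi hx)) hf
  rwa [integral_Ioi_of_hasDerivAt_of_tendsto' hF hf hlim, add_sub_cancel]

theorem norm_sub_le_integral_Ioi_of_hasDerivAt {L : E} (hF : ∀ x ∈ Ici a, HasDerivAt F (f x) x)
    (hf : IntegrableOn f (Ioi a)) (hL : Tendsto F atTop (𝓝 L)) :
    ‖F a - L‖ ≤ ∫ x in Ioi a, ‖f x‖ := by
  rw [← norm_neg, neg_sub, ← integral_Ioi_of_hasDerivAt_of_tendsto' hF hf hL]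
  exact norm_integral_le_integral_norm f

end ImproperIntegral

theorem norm_sub_cexp_neg_mul (θ : ℝ) (z W : ℂ) :
    ‖z - Complex.exp (-(Complex.I * θ)) * W‖ = ‖Complex.exp (Complex.I * θ) * z - W‖ := by
  rw [← one_mul ‖z - _‖, ← Complex.norm_exp_I_mul_ofReal θ, ← norm_mul, mul_sub, ← mul_assoc,
    ← Complex.exp_add, add_neg_cancel, Complex.exp_zero, one_mul]

structure IsSerretFrenet (κ τ m n b : ℝ → ℝ) : Prop where
  hasDerivAt_m (x : ℝ) : HasDerivAt m (κ x * n x) x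
  hasDerivAt_n (x : ℝ) : HasDerivAt n (-κ x * m x - τ x * b x) x
  hasDerivAt_b (x : ℝ) : HasDerivAt b (τ x * n x) x

namespace IsSerretFrenet

variable {κ τ m n b : ℝ → ℝ}

theorem continuous_n (h : IsSerretFrenet κ τ m n b) : Continuous n :=
  continuous_iff_continuousAt.2 fun x => (h.hasDerivAt_n x).continuousAt

theorem continuous_b (h : IsSerretFrenet κ τ m n b) : Continuous b :=
  continuous_iff_continuousAt.2 fun x => (h.hasDerivAt_b x).continuousAt

theorem sq_add_sq_add_sq_eq (h : IsSerretFrenet κ τ m n b) (x : ℝ) :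
    m x ^ 2 + n x ^ 2 + b x ^ 2 = m 0 ^ 2 + n 0 ^ 2 + b 0 ^ 2 := by
  have hderiv (y : ℝ) : HasDerivAt (fun y => m y ^ 2 + n y ^ 2 + b y ^ 2) 0 y := by
    refine ((((h.hasDerivAt_m y).pow 2).add ((h.hasDerivAt_n y).pow 2)).add
      ((h.hasDerivAt_b y).pow 2)).congr_deriv ?_
    ring
  exact is_const_of_deriv_eq_zero (fun y => (hderiv y).differentiableAt)
    (fun y => (hderiv y).deriv) x 0

theorem abs_n_le_one (h : IsSerretFrenet κ τ m n b) (h0 : m 0 ^ 2 + n 0 ^ 2 + b 0 ^ 2 = 1)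
    (x : ℝ) : |n x| ≤ 1 := by
  rw [← sq_le_one_iff_abs_le_one]
  nlinarith [h.sq_add_sq_add_sq_eq x, sq_nonneg (m x), sq_nonneg (b x)]

theorem abs_b_le_one (h : IsSerretFrenet κ τ m n b) (h0 : m 0 ^ 2 + n 0 ^ 2 + b 0 ^ 2 = 1)
    (x : ℝ) : |b x| ≤ 1 := by
  rw [← sq_le_one_iff_abs_le_one]
  nlinarith [h.sq_add_sq_add_sq_eq x, sq_nonneg (m x), sq_nonneg (n x)]

/-- The phase `e^{iθ}`, `θ' = κ`, cancels the curvature term of `(m + i n)'`, and a corrector `ρ`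
with `κ ρ = τ b` cancels the torsion term. -/
theorem hasDerivAt_cexp_mul_add (h : IsSerretFrenet κ τ m n b) {θ ρ : ℝ → ℝ} {x d : ℝ}
    (hθ : HasDerivAt θ (κ x) x) (hρ : HasDerivAt ρ d x) (hκρ : κ x * ρ x = τ x * b x) :
    HasDerivAt (fun y => Complex.exp (Complex.I * θ y) * ((m y : ℂ) + Complex.I * n y + ρ y))
      (Complex.exp (Complex.I * θ x) * d) x := by
  have hphase := (hθ.ofReal_comp.const_mul Complex.I).cexp
  have hm := (h.hasDerivAt_m x).ofReal_comp
  have hn := (h.hasDerivAt_n x).ofReal_comp.const_mul Complex.I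
  refine (hphase.mul ((hm.add hn).add hρ.ofReal_comp)).congr_deriv ?_
  have hκρ' : (κ x : ℂ) * ρ x = τ x * b x := by exact_mod_cast hκρ
  simp only [Pi.add_apply]
  push_cast
  linear_combination (Complex.exp (Complex.I * θ x) * Complex.I) * hκρ' +
    (Complex.exp (Complex.I * θ x) * κ x * n x) * Complex.I_mul_I

end IsSerretFrenet

theorem hasDerivAt_Phi (α x : ℝ) : HasDerivAt (Phi α) (Real.exp (α * x ^ 2 / 4)) x :=
  ((by fun_prop : Continuous fun s : ℝ => Real.exp (α * s ^ 2 / 4)).integral_hasStrictDerivAt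
    0 x).hasDerivAt

@[simp]
theorem Phi_zero (α : ℝ) : Phi α 0 = 0 := intervalIntegral.integral_same

theorem continuous_Phi (α : ℝ) : Continuous (Phi α) :=
  continuous_iff_continuousAt.2 fun x => (hasDerivAt_Phi α x).continuousAt

/-- `τ b / κ` for the curvature `κ = c e^{α x²/4}` and torsion `τ = β x / 2` of the system. -/
def corrector (α β c : ℝ) (b : ℝ → ℝ) (x : ℝ) : ℝ :=
  Real.exp (-α * x ^ 2 / 4) * (β * x / 2) * b x / c

def limitIntegrand (α β c : ℝ) (n b : ℝ → ℝ) (s : ℝ) : ℂ :=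
  Complex.exp (Complex.I * ((c * Phi α s : ℝ) : ℂ) - ((α * s ^ 2 / 4 : ℝ) : ℂ))
    * (((β * s ^ 2 / 2 * n s : ℝ) : ℂ) + ((1 - α * s ^ 2 / 2) * b s : ℝ))

section Shrinker

variable {α β c : ℝ} {m n b : ℝ → ℝ}

theorem hasDerivAt_corrector {x : ℝ} (hb : HasDerivAt b (β * x / 2 * n x) x) :
    HasDerivAt (corrector α β c b) (β / (2 * c) * Real.exp (-α * x ^ 2 / 4) *
      (β * x ^ 2 / 2 * n x + (1 - α * x ^ 2 / 2) * b x)) x := by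
  have hexp : HasDerivAt (fun y => Real.exp (-α * y ^ 2 / 4))
      (Real.exp (-α * x ^ 2 / 4) * (-α * (2 * x) / 4)) x := by
    simpa using (((hasDerivAt_pow 2 x).const_mul (-α)).div_const 4).exp
  have hlin : HasDerivAt (fun y : ℝ => β * y / 2) (β / 2) x := by
    simpa using ((hasDerivAt_id' x).const_mul β).div_const 2
  have hprod : HasDerivAt (fun y => Real.exp (-α * y ^ 2 / 4) * (β * y / 2))
      (Real.exp (-α * x ^ 2 / 4) * (-α * (2 * x) / 4) * (β * x / 2)
        + Real.exp (-α * x ^ 2 / 4) * (β / 2)) x := hexp.mul hlin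
  refine ((hprod.mul hb).div_const c).congr_deriv ?_
  ring

theorem hasDerivAt_phase_mul_add_corrector
    (hsys : IsSerretFrenet (fun x => c * Real.exp (α * x ^ 2 / 4)) (fun x => β * x / 2) m n b)
    (hc : c ≠ 0) (x : ℝ) :
    HasDerivAt (fun y => Complex.exp (Complex.I * ((c * Phi α y : ℝ) : ℂ)) *
        ((m y : ℂ) + Complex.I * n y + corrector α β c b y))
      (((β / (2 * c) : ℝ) : ℂ) * limitIntegrand α β c n b x) x := by
  have hexp : Real.exp (-α * x ^ 2 / 4) = (Real.exp (α * x ^ 2 / 4))⁻¹ := by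
    rw [← Real.exp_neg]; ring_nf
  refine (hsys.hasDerivAt_cexp_mul_add ((hasDerivAt_Phi α x).const_mul c)
    (hasDerivAt_corrector (hsys.hasDerivAt_b x)) ?_).congr_deriv ?_
  · have hexp_ne := Real.exp_ne_zero (α * x ^ 2 / 4)
    rw [corrector, hexp]
    field_simp
  · rw [limitIntegrand, Complex.exp_sub, ← Complex.ofReal_exp, hexp]
    push_cast
    ring

theorem abs_corrector_le (hβ : 0 ≤ β) (hc : 0 < c) {x : ℝ} (hx : 0 ≤ x) (hb : |b x| ≤ 1) :
    |corrector α β c b x| ≤ β / (2 * c) * x * Real.exp (-α * x ^ 2 / 4) := by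
  rw [corrector, abs_div, abs_mul, abs_of_pos hc, abs_of_nonneg (by positivity)]
  calc Real.exp (-α * x ^ 2 / 4) * (β * x / 2) * |b x| / c
      ≤ Real.exp (-α * x ^ 2 / 4) * (β * x / 2) * 1 / c := by gcongr
    _ = _ := by field_simp

theorem continuous_limitIntegrand (hn : Continuous n) (hb : Continuous b) :
    Continuous (limitIntegrand α β c n b) := by
  have := continuous_Phi α
  unfold limitIntegrand
  fun_prop

theorem norm_limitIntegrand_le (hα : α ∈ Icc 0 1) (hβ : β ∈ Icc 0 1) {s : ℝ}
    (hn : |n s| ≤ 1) (hb : |b s| ≤ 1) :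
    ‖limitIntegrand α β c n b s‖ ≤ (1 + s ^ 2) * Real.exp (-(α / 4) * s ^ 2) := by
  have hphase : ‖Complex.exp (Complex.I * ((c * Phi α s : ℝ) : ℂ) - ((α * s ^ 2 / 4 : ℝ) : ℂ))‖
      = Real.exp (-(α / 4) * s ^ 2) := by
    rw [Complex.norm_exp]
    congr 1
    simp only [Complex.sub_re, Complex.mul_re, Complex.I_re, Complex.I_im, Complex.ofReal_re,
      Complex.ofReal_im]
    ring
  have h1 : |β * s ^ 2 / 2 * n s| ≤ s ^ 2 / 2 := by
    rw [abs_mul, abs_of_nonneg (by have := hβ.1; positivity)]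
    nlinarith [abs_nonneg (n s), sq_nonneg s, mul_nonneg (sq_nonneg s) (sub_nonneg.2 hβ.2)]
  have h2 : |(1 - α * s ^ 2 / 2) * b s| ≤ 1 + s ^ 2 / 2 := by
    have : |1 - α * s ^ 2 / 2| ≤ 1 + s ^ 2 / 2 := by
      rw [abs_le]
      constructor <;> nlinarith [sq_nonneg s, mul_nonneg hα.1 (sq_nonneg s), hα.2]
    rw [abs_mul]
    nlinarith [abs_nonneg (b s), abs_nonneg (1 - α * s ^ 2 / 2)]
  rw [limitIntegrand, norm_mul, hphase, mul_comm]
  gcongr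
  refine (norm_add_le _ _).trans ?_
  simp only [Complex.norm_real, Real.norm_eq_abs]
  linarith

theorem integrable_limitIntegrand (hα : α ∈ Ioc 0 1) (hβ : β ∈ Icc 0 1) (hn : Continuous n)
    (hb : Continuous b) (hn1 : ∀ s, |n s| ≤ 1) (hb1 : ∀ s, |b s| ≤ 1) :
    Integrable (limitIntegrand α β c n b) :=
  (integrable_one_add_sq_mul_exp_neg_mul_sq (by linarith [hα.1] : 0 < α / 4)).mono'
    (continuous_limitIntegrand hn hb).aestronglyMeasurable
    (Eventually.of_forall fun s =>
      norm_limitIntegrand_le (Ioc_subset_Icc_self hα) hβ (hn1 s) (hb1 s))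

theorem integral_Ioi_norm_limitIntegrand_le (hα : α ∈ Ioc 0 1) (hβ : β ∈ Icc 0 1)
    (hn : Continuous n) (hb : Continuous b) (hn1 : ∀ s, |n s| ≤ 1) (hb1 : ∀ s, |b s| ≤ 1)
    {x : ℝ} (hx : 1 ≤ x) :
    ∫ s in Ioi x, ‖limitIntegrand α β c n b s‖
      ≤ 2 / α * (x + 1 + 2 / α) * Real.exp (-α * x ^ 2 / 4) := by
  have hα4 : 0 < α / 4 := by linarith [hα.1]
  calc ∫ s in Ioi x, ‖limitIntegrand α β c n b s‖
      ≤ ∫ s in Ioi x, (1 + s ^ 2) * Real.exp (-(α / 4) * s ^ 2) :=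
        setIntegral_mono (integrable_limitIntegrand hα hβ hn hb hn1 hb1).norm.integrableOn
          (integrable_one_add_sq_mul_exp_neg_mul_sq hα4).integrableOn
          fun s => norm_limitIntegrand_le (Ioc_subset_Icc_self hα) hβ (hn1 s) (hb1 s)
    _ ≤ (x + 1 + 1 / (2 * (α / 4))) / (2 * (α / 4)) * Real.exp (-(α / 4) * x ^ 2) :=
        integral_Ioi_one_add_sq_mul_exp_neg_mul_sq_le hα4 hx
    _ = _ := by
        rw [show -(α / 4) * x ^ 2 = -α * x ^ 2 / 4 by ring]
        field_simp
        ring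

theorem tail_constant_le {x : ℝ} (hα : α ∈ Ioc 0 1) (hβ : 0 ≤ β) (hc : 0 < c) (hx : 1 ≤ x) :
    β / (2 * c) * (2 / α * (x + 1 + 2 / α)) + β / (2 * c) * x ≤ 10 * β / (c * α ^ 2) * x := by
  obtain ⟨hα0, hα1⟩ := hα
  have hx0 : 0 ≤ x := by linarith
  calc β / (2 * c) * (2 / α * (x + 1 + 2 / α)) + β / (2 * c) * x
      = β / (2 * c * α ^ 2) * (α ^ 2 * x + 2 * α * (x + 1) + 4) := by
        field_simp
        ring
    _ ≤ β / (2 * c * α ^ 2) * (20 * x) := by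
        gcongr
        nlinarith [mul_le_mul_of_nonneg_right hα1 hx0,
          mul_le_mul_of_nonneg_right (pow_le_one₀ hα0.le hα1 : α ^ 2 ≤ 1) hx0]
    _ = 10 * β / (c * α ^ 2) * x := by
        field_simp
        ring

theorem norm_phase_mul_sub_le (hα : α ∈ Ioc 0 1) (hβ : β ∈ Icc 0 1) (hc : 0 < c)
    (hsys : IsSerretFrenet (fun x => c * Real.exp (α * x ^ 2 / 4)) (fun x => β * x / 2) m n b)
    (h0 : m 0 ^ 2 + n 0 ^ 2 + b 0 ^ 2 = 1) {W : ℂ}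
    (hW : Tendsto (fun y => Complex.exp (Complex.I * ((c * Phi α y : ℝ) : ℂ)) *
        ((m y : ℂ) + Complex.I * n y + corrector α β c b y)) atTop (𝓝 W))
    {x : ℝ} (hx : 1 ≤ x) :
    ‖Complex.exp (Complex.I * ((c * Phi α x : ℝ) : ℂ)) * ((m x : ℂ) + Complex.I * n x) - W‖
      ≤ 10 * β / (c * α ^ 2) * x * Real.exp (-α * x ^ 2 / 4) := by
  have hβ0 := hβ.1
  set e := Real.exp (-α * x ^ 2 / 4)
  have hg := integrable_limitIntegrand (c := c) hα hβ hsys.continuous_n hsys.continuous_b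
    (hsys.abs_n_le_one h0) (hsys.abs_b_le_one h0)
  have htail := norm_sub_le_integral_Ioi_of_hasDerivAt
    (fun y _ => hasDerivAt_phase_mul_add_corrector hsys hc.ne' y)
    (hg.const_mul _).integrableOn hW (a := x)
  simp only [norm_mul, Complex.norm_real, Real.norm_eq_abs,
    abs_of_nonneg (by positivity : 0 ≤ β / (2 * c)), integral_const_mul] at htail
  have hintegral := integral_Ioi_norm_limitIntegrand_le (c := c) hα hβ hsys.continuous_n
    hsys.continuous_b (hsys.abs_n_le_one h0) (hsys.abs_b_le_one h0) hx
  have hρ : ‖Complex.exp (Complex.I * ((c * Phi α x : ℝ) : ℂ)) * corrector α β c b x‖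
      = |corrector α β c b x| := by
    rw [norm_mul, Complex.norm_exp_I_mul_ofReal, one_mul, Complex.norm_real, Real.norm_eq_abs]
  calc _ = ‖(Complex.exp (Complex.I * ((c * Phi α x : ℝ) : ℂ)) *
          ((m x : ℂ) + Complex.I * n x + corrector α β c b x) - W)
        - Complex.exp (Complex.I * ((c * Phi α x : ℝ) : ℂ)) * corrector α β c b x‖ := by ring_nf
    _ ≤ (β / (2 * c) * ∫ s in Ioi x, ‖limitIntegrand α β c n b s‖)
          + |corrector α β c b x| := by
        rw [← hρ]
        exact (norm_sub_le _ _).trans (add_le_add_left htail _)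
    _ ≤ β / (2 * c) * (2 / α * (x + 1 + 2 / α) * e) + β / (2 * c) * x * e := by
        gcongr
        exact abs_corrector_le hβ0 hc (by linarith) (hsys.abs_b_le_one h0 x)
    _ = (β / (2 * c) * (2 / α * (x + 1 + 2 / α)) + β / (2 * c) * x) * e := by ring
    _ ≤ 10 * β / (c * α ^ 2) * x * e := by
        gcongr
        exact tail_constant_le hα hβ0 hc hx

theorem tendsto_phase_mul (hα : α ∈ Ioc 0 1) (hβ : β ∈ Icc 0 1) (hc : 0 < c)
    (hsys : IsSerretFrenet (fun x => c * Real.exp (α * x ^ 2 / 4)) (fun x => β * x / 2) m n b)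
    (h0 : m 0 ^ 2 + n 0 ^ 2 + b 0 ^ 2 = 1) {W : ℂ}
    (hW : Tendsto (fun y => Complex.exp (Complex.I * ((c * Phi α y : ℝ) : ℂ)) *
        ((m y : ℂ) + Complex.I * n y + corrector α β c b y)) atTop (𝓝 W)) :
    Tendsto (fun x => Complex.exp (Complex.I * ((c * Phi α x : ℝ) : ℂ)) *
      ((m x : ℂ) + Complex.I * n x)) atTop (𝓝 W) := by
  have hα4 : 0 < α / 4 := by linarith [hα.1]
  have hdecay := (tendsto_rpow_mul_exp_neg_mul_sq_atTop hα4 1).const_mul (10 * β / (c * α ^ 2))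
  rw [mul_zero] at hdecay
  rw [tendsto_iff_norm_sub_tendsto_zero]
  refine squeeze_zero' (Eventually.of_forall fun _ => norm_nonneg _)
    ((eventually_ge_atTop 1).mono fun x hx => norm_phase_mul_sub_le hα hβ hc hsys h0 hW hx)
    (hdecay.congr fun x => ?_)
  rw [Real.rpow_one]
  ring_nf

end Shrinker

theorem stmt16 (α β c : ℝ) (hα : α ∈ Set.Ioc (0 : ℝ) 1) (hβ : β = Real.sqrt (1 - α ^ 2))
    (hc : 0 < c) (m n b : ℝ → ℝ)
    (hmdiff : Differentiable ℝ m) (hndiff : Differentiable ℝ n) (hbdiff : Differentiable ℝ b)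
    (hm : ∀ x : ℝ, deriv m x = c * Real.exp (α * x ^ 2 / 4) * n x)
    (hn : ∀ x : ℝ, deriv n x
      = -(c * Real.exp (α * x ^ 2 / 4)) * m x - (β * x / 2) * b x)
    (hb : ∀ x : ℝ, deriv b x = (β * x / 2) * n x)
    (h0 : m 0 ^ 2 + n 0 ^ 2 + b 0 ^ 2 = 1)
    (w : ℝ → ℂ) (hw : w = fun x => (m x : ℂ) + Complex.I * (n x : ℂ)) :
    -- the improper integral defining `W` is well defined
    IntegrableOn
      (fun s : ℝ =>
        Complex.exp (Complex.I * ((c * Phi α s : ℝ) : ℂ) - ((α * s ^ 2 / 4 : ℝ) : ℂ))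
          * (((β * s ^ 2 / 2 * n s : ℝ) : ℂ) + ((1 - α * s ^ 2 / 2) * b s : ℝ)))
      (Set.Ioi (0 : ℝ)) ∧
    ∃ W : ℂ,
      W = w 0 + (β / (2 * c) : ℝ) *
        ∫ s in Set.Ioi (0 : ℝ),
          Complex.exp (Complex.I * ((c * Phi α s : ℝ) : ℂ) - ((α * s ^ 2 / 4 : ℝ) : ℂ))
            * (((β * s ^ 2 / 2 * n s : ℝ) : ℂ) + ((1 - α * s ^ 2 / 2) * b s : ℝ)) ∧
      Tendsto (fun x : ℝ => Complex.exp (Complex.I * ((c * Phi α x : ℝ) : ℂ)) * w x)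
        atTop (nhds W) ∧
      (∀ x : ℝ, 1 ≤ x →
        ‖w x - Complex.exp (-(Complex.I * ((c * Phi α x : ℝ) : ℂ))) * W‖
          ≤ 10 * β / (c * α ^ 2) * x * Real.exp (-α * x ^ 2 / 4)) := by
  have hβ' : β ∈ Icc 0 1 := hβ ▸ ⟨Real.sqrt_nonneg _, Real.sqrt_le_one.mpr (by nlinarith)⟩
  have hsys : IsSerretFrenet (fun x => c * Real.exp (α * x ^ 2 / 4)) (fun x => β * x / 2) m n b :=
    ⟨fun x => hm x ▸ (hmdiff x).hasDerivAt, fun x => hn x ▸ (hndiff x).hasDerivAt,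
      fun x => hb x ▸ (hbdiff x).hasDerivAt⟩
  have hg := integrable_limitIntegrand (c := c) hα hβ' hsys.continuous_n hsys.continuous_b
    (hsys.abs_n_le_one h0) (hsys.abs_b_le_one h0)
  have hlim := tendsto_add_integral_Ioi_of_hasDerivAt (a := 0)
    (fun x _ => hasDerivAt_phase_mul_add_corrector hsys hc.ne' x) (hg.const_mul _).integrableOn
  simp only [integral_const_mul, corrector, Phi_zero, mul_zero, zero_div, zero_mul,
    Complex.ofReal_zero, Complex.exp_zero, one_mul, add_zero] at hlim
  subst hw
  refine ⟨hg.integrableOn, _, rfl, tendsto_phase_mul hα hβ' hc hsys h0 hlim, fun x hx => ?_⟩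
  rw [norm_sub_cexp_neg_mul]
  exact norm_phase_mul_sub_le hα hβ' hc hsys h0 hlim hx
end
end
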